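/- Let p be an odd prime, let ℓ be an odd prime, and let a, b ∈ ℚ_p be nonzero elements with a^ℓ + b^ℓ + 1 = 0. Set λ = −a^ℓ and let E_λ be the Weierstrass curve y² = x(x−1)(x−λ) over ℚ_p. Then Δ(E_λ) ≠ 0, and either v_p(Δ(E_λ)) = 0 (so the equation has good reduction at p), or j(E_λ) ≠ 0, v_p(j(E_λ)) < 0, and ℓ divides v_p(j(E_λ)). -/

import Mathlib

/-- The Legendre curve `y² = x(x-1)(x-λ)` as a Weierstrass curve. -/
def LegendreCurve {R : Type*} [CommRing R] (lam : R) : WeierstrassCurve R :=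
  { a₁ := 0, a₂ := -(lam + 1), a₃ := 0, a₄ := lam, a₆ := 0 }

/-!
With `λ = -aˡ` the Fermat relation gives `λ(λ - 1) = -(ab)ˡ`, so for `u = (ab)ˡ` the Legendre
curve has `Δ = 2⁴u²` and `j = 2⁸(1 - u)³/u²`. Since `p` is odd, `v(Δ) = 2v(u)`. If `v(u) ≠ 0`,
the ultrametric inequality gives `v(1 - u) = min 0 (v(u))`, so `v(j) = 3 min 0 (v(u)) - 2v(u) < 0`,
and `ℓ ∣ v(j)` because `v(u) = ℓ v(ab)`.
-/

namespace LegendreCurve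

lemma Δ_eq {R : Type*} [CommRing R] (lam : R) :
    (LegendreCurve lam).Δ = 2 ^ 4 * (lam * (lam - 1)) ^ 2 := by
  simp only [LegendreCurve, WeierstrassCurve.Δ, WeierstrassCurve.b₂, WeierstrassCurve.b₄,
    WeierstrassCurve.b₆, WeierstrassCurve.b₈]
  ring

lemma c₄_eq {R : Type*} [CommRing R] (lam : R) :
    (LegendreCurve lam).c₄ = 2 ^ 4 * (lam * (lam - 1) + 1) := by
  simp only [LegendreCurve, WeierstrassCurve.c₄, WeierstrassCurve.b₂, WeierstrassCurve.b₄]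
  ring

lemma c₄_cube_div_Δ {K : Type*} [Field K] (lam : K) :
    (LegendreCurve lam).c₄ ^ 3 / (LegendreCurve lam).Δ =
      2 ^ 8 * ((lam * (lam - 1) + 1) ^ 3 / (lam * (lam - 1)) ^ 2) := by
  rw [c₄_eq, Δ_eq]
  field_simp

end LegendreCurve

namespace Padic

variable {p : ℕ} [Fact p.Prime]

lemma valuation_neg (x : ℚ_[p]) : (-x).valuation = x.valuation := by
  rcases eq_or_ne x 0 with rfl | hx
  · rw [neg_zero]
  have hsq : 2 * (-1 : ℚ_[p]).valuation = 0 := by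
    simpa using valuation_pow (-1 : ℚ_[p]) 2
  rw [neg_eq_neg_one_mul, valuation_mul (by norm_num) hx]
  omega

lemma valuation_add_of_valuation_ne {x y : ℚ_[p]} (hx : x ≠ 0) (hy : y ≠ 0)
    (h : x.valuation ≠ y.valuation) : (x + y).valuation = min x.valuation y.valuation := by
  have hp : (1 : ℝ) < p := mod_cast (Fact.out : p.Prime).one_lt
  have hinj := zpow_right_injective₀ (zero_lt_one.trans hp) hp.ne'
  have hnorm : ‖x + y‖ = (p : ℝ) ^ (-min x.valuation y.valuation) := by
    rw [add_eq_max_of_ne, norm_eq_zpow_neg_valuation hx, norm_eq_zpow_neg_valuation hy,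
      ← (zpow_right_strictMono₀ hp).monotone.map_max, max_neg_neg]
    rw [norm_eq_zpow_neg_valuation hx, norm_eq_zpow_neg_valuation hy]
    exact hinj.ne (neg_injective.ne h)
  have hxy : x + y ≠ 0 := by
    intro h0
    rw [h0, norm_zero] at hnorm
    exact (zpow_pos (zero_lt_one.trans hp) _).ne hnorm
  rw [norm_eq_zpow_neg_valuation hxy] at hnorm
  exact neg_injective (hinj hnorm)

lemma valuation_one_sub {u : ℚ_[p]} (hu : u.valuation ≠ 0) :
    (1 - u).valuation = min 0 u.valuation := by
  have hu0 : u ≠ 0 := by rintro rfl; exact hu valuation_zero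
  rw [sub_eq_add_neg, valuation_add_of_valuation_ne one_ne_zero (neg_ne_zero.2 hu0),
    valuation_one, valuation_neg]
  rwa [valuation_one, valuation_neg, ne_comm]

lemma valuation_one_sub_cube_div_sq {u : ℚ_[p]} (hu : u.valuation ≠ 0) :
    ((1 - u) ^ 3 / u ^ 2).valuation = 3 * min 0 u.valuation - 2 * u.valuation := by
  have hu0 : u ≠ 0 := by rintro rfl; exact hu valuation_zero
  have hu1 : 1 - u ≠ 0 := sub_ne_zero.2 fun h => hu (by rw [← h, valuation_one])
  rw [div_eq_mul_inv, valuation_mul (pow_ne_zero 3 hu1) (inv_ne_zero (pow_ne_zero 2 hu0)),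
    valuation_inv, valuation_pow, valuation_pow, valuation_one_sub hu]
  push_cast
  ring

lemma valuation_two_pow_mul (hp : p ≠ 2) (k : ℕ) {z : ℚ_[p]} (hz : z ≠ 0) :
    (2 ^ k * z).valuation = z.valuation := by
  have h2 : (2 : ℚ_[p]).valuation = 0 := by
    rw [valuation_ofNat, padicValNat.eq_zero_of_not_dvd, Nat.cast_zero]
    exact fun h => hp ((Nat.prime_dvd_prime_iff_eq Fact.out Nat.prime_two).1 h)
  rw [valuation_mul (by simp) hz, valuation_pow, h2, mul_zero, zero_add]

end Padic

open Padic in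
theorem stmt2_general (p : ℕ) [Fact p.Prime] (hp : p ≠ 2)
    (ℓ : ℕ) (a b : ℚ_[p])
    (ha : a ≠ 0) (hb : b ≠ 0) (hab : a ^ ℓ + b ^ ℓ + 1 = 0) :
    (LegendreCurve (-a ^ ℓ)).Δ ≠ 0 ∧
    (((LegendreCurve (-a ^ ℓ)).Δ).valuation = 0 ∨
      ((LegendreCurve (-a ^ ℓ)).c₄ ^ 3 / (LegendreCurve (-a ^ ℓ)).Δ ≠ 0 ∧
       ((LegendreCurve (-a ^ ℓ)).c₄ ^ 3 / (LegendreCurve (-a ^ ℓ)).Δ).valuation < 0 ∧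
       (ℓ : ℤ) ∣ ((LegendreCurve (-a ^ ℓ)).c₄ ^ 3 / (LegendreCurve (-a ^ ℓ)).Δ).valuation)) := by
  set u := (a * b) ^ ℓ with hu_def
  have hu : u ≠ 0 := pow_ne_zero ℓ (mul_ne_zero ha hb)
  have hm : -a ^ ℓ * (-a ^ ℓ - 1) = -u := by rw [hu_def, mul_pow]; linear_combination a ^ ℓ * hab
  have hj : (LegendreCurve (-a ^ ℓ)).c₄ ^ 3 / (LegendreCurve (-a ^ ℓ)).Δ =
      2 ^ 8 * ((1 - u) ^ 3 / u ^ 2) := by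
    rw [LegendreCurve.c₄_cube_div_Δ, hm, neg_sq, neg_add_eq_sub]
  have hΔ : (LegendreCurve (-a ^ ℓ)).Δ = 2 ^ 4 * u ^ 2 := by rw [LegendreCurve.Δ_eq, hm, neg_sq]
  have hℓu : (ℓ : ℤ) ∣ u.valuation := by rw [valuation_pow]; exact dvd_mul_right _ _
  rw [hj, hΔ]
  refine ⟨mul_ne_zero (by norm_num) (pow_ne_zero 2 hu), ?_⟩
  by_cases hu_unit : u.valuation = 0
  · left
    rw [valuation_two_pow_mul hp _ (pow_ne_zero 2 hu), valuation_pow, hu_unit, mul_zero]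
  · right
    have hu1 : 1 - u ≠ 0 := sub_ne_zero.2 fun h => hu_unit (by rw [← h, valuation_one])
    have hj0 : (1 - u) ^ 3 / u ^ 2 ≠ 0 := div_ne_zero (pow_ne_zero 3 hu1) (pow_ne_zero 2 hu)
    rw [valuation_two_pow_mul hp _ hj0, valuation_one_sub_cube_div_sq hu_unit]
    refine ⟨mul_ne_zero (by norm_num) hj0, by omega, ?_⟩
    have hℓmin : (ℓ : ℤ) ∣ min 0 u.valuation := by
      rcases min_choice 0 u.valuation with h | h <;> rw [h]
      exacts [dvd_zero _, hℓu]
    exact dvd_sub (dvd_mul_of_dvd_right hℓmin 3) (dvd_mul_of_dvd_right hℓu 2)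

theorem stmt2 (p : ℕ) [Fact p.Prime] (hp : p ≠ 2)
    (ℓ : ℕ) (hℓ : ℓ.Prime) (hℓ2 : ℓ ≠ 2) (a b : ℚ_[p])
    (ha : a ≠ 0) (hb : b ≠ 0) (hab : a ^ ℓ + b ^ ℓ + 1 = 0) :
    (LegendreCurve (-a ^ ℓ)).Δ ≠ 0 ∧
    (((LegendreCurve (-a ^ ℓ)).Δ).valuation = 0 ∨
      ((LegendreCurve (-a ^ ℓ)).c₄ ^ 3 / (LegendreCurve (-a ^ ℓ)).Δ ≠ 0 ∧
       ((LegendreCurve (-a ^ ℓ)).c₄ ^ 3 / (LegendreCurve (-a ^ ℓ)).Δ).valuation < 0 ∧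
       (ℓ : ℤ) ∣ ((LegendreCurve (-a ^ ℓ)).c₄ ^ 3 / (LegendreCurve (-a ^ ℓ)).Δ).valuation)) :=
  stmt2_general p hp ℓ a b ha hb hab
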